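/- If Φ is a Parseval frame for F^N with M vectors and 1 ≤ k ≤ N, then the sum over all subsets K ⊆ [M] with |K| = k of det(Φ_K* Φ_K) equals the binomial coefficient C(N,k). -/

import Mathlib

/-!
The k-th coefficient of `det (1 + X • G)` is the sum of the k×k principal minors of `G`.
For the Gram matrix `G = Φᴴ Φ` these minors are the squared volumes, and by Sylvester's
determinant identity `det (1 + X • Φᴴ Φ) = det (1 + X • Φ Φᴴ) = (1 + X) ^ N`.
-/

open Matrix Finset Polynomial


noncomputable def colSub {N M : ℕ} (Φ : Matrix (Fin N) (Fin M) ℂ) (K : Finset (Fin M)) :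
    Matrix (Fin N) ↥K ℂ := Φ.submatrix id (fun k => (k : Fin M))

/-- The k-dimensional volume of the parallelotope spanned by the columns of Φ indexed by K. -/
noncomputable def vol {N M : ℕ} (Φ : Matrix (Fin N) (Fin M) ℂ) (K : Finset (Fin M)) : ℝ :=
  Real.sqrt (((colSub Φ K)ᴴ * colSub Φ K).det.re)

theorem colSub_conjTranspose_mul_colSub {N M : ℕ} (Φ : Matrix (Fin N) (Fin M) ℂ)
    (K : Finset (Fin M)) :
    (colSub Φ K)ᴴ * colSub Φ K = (Φᴴ * Φ).submatrix Subtype.val Subtype.val := by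
  ext i j
  simp [colSub, Matrix.mul_apply]

section PrincipalMinors

variable {m n R : Type*} [Fintype m] [Fintype n] [DecidableEq m] [DecidableEq n] [CommRing R]

theorem det_one_add_X_smul_mul_of_mul_eq_one {A : Matrix m n R} {B : Matrix n m R}
    (hAB : A * B = 1) :
    det (1 + (X : R[X]) • (B * A).map C) = (1 + X) ^ Fintype.card m := by
  have hAB' : A.map C * ((X : R[X]) • B.map C) = (1 + X : R[X]) • 1 - 1 := by
    rw [Matrix.mul_smul, ← Matrix.map_mul, hAB, Matrix.map_one _ (map_zero _) (map_one _),
      add_smul, one_smul, add_sub_cancel_left]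
  rw [Matrix.map_mul, ← Matrix.smul_mul, Matrix.det_one_add_mul_comm, hAB', add_sub_cancel,
    det_smul, det_one, mul_one]

theorem sum_det_principal_minors_of_mul_eq_one {A : Matrix m n R} {B : Matrix n m R}
    (hAB : A * B = 1) (k : ℕ) :
    ∑ s ∈ univ.powersetCard k, ((B * A).submatrix (Subtype.val : s → n) Subtype.val).det =
      (Fintype.card m).choose k := by
  rw [← coeff_det_one_add_X_smul_eq_sum_minors, det_one_add_X_smul_mul_of_mul_eq_one hAB,
    add_comm, coeff_X_add_one_pow]

end PrincipalMinors

theorem sum_sq_volumes {N M k : ℕ}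
    (Φ : Matrix (Fin N) (Fin M) ℂ) (hΦ : Φ * Φᴴ = 1) :
    ∑ K ∈ Finset.powersetCard k (Finset.univ : Finset (Fin M)),
        ((colSub Φ K)ᴴ * colSub Φ K).det = (N.choose k : ℂ) := by
  simp only [colSub_conjTranspose_mul_colSub]
  rw [sum_det_principal_minors_of_mul_eq_one hΦ, Fintype.card_fin]
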